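/- Let P, Q be probability distributions on ℝ with everywhere positive continuous densities f_X, f_Y and CDFs F_X, F_Y, and let X ∼ P. Let Q_P^{SD} denote the law of W = 2 F_Y(X)(1 − F_Y(X)), and let R denote the distribution on [0, 1/2] with density r(z) = 1/√(1 − 2z). Then TVD(Q_P^{SD}, R) ≤ TVD(P, Q); by symmetry also TVD(P_Q^{SD}, R) ≤ TVD(P, Q), where P_Q^{SD} is the law of 2 F_X(Y)(1 − F_X(Y)) for Y ∼ Q. -/

import Mathlib

/-!
Let `F` be the CDF of `Q`. It is a continuous increasing bijection of `ℝ` onto `(0, 1)`, so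
`F(Y)` is uniform on `(0, 1)` for `Y ∼ Q`. Since `2u(1 - u) ≤ z` exactly when
`|1 - 2u| ≥ √(1 - 2z)`, the map `u ↦ 2u(1 - u)` sends the uniform law to `R`. Hence `R` is the
image of `Q` under `SD(·; Q) = 2F(1 - F)`, and `Q_P^{SD}` is the image of `P` under the same map.
Total variation distance is the largest value of `μ(A) - ν(A)`, so it cannot increase under a
measurable map.
-/

open MeasureTheory Set

/-- The total variation distance between two measures on `ℝ`, computed via their
densities (Radon–Nikodym derivatives) with respect to Lebesgue measure:
`TVD(P,Q) = (1/2) ∫ |p(x) - q(x)| dx`. -/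
noncomputable def TVD (μ ν : Measure ℝ) : ℝ :=
  (1 / 2) * ∫ x, |(μ.rnDeriv volume x).toReal - (ν.rnDeriv volume x).toReal|

open ProbabilityTheory

lemma TVD_comm (μ ν : Measure ℝ) : TVD μ ν = TVD ν μ := by
  simp only [TVD, abs_sub_comm]

section TotalVariation

variable {μ ν : Measure ℝ} [IsProbabilityMeasure μ] [IsProbabilityMeasure ν]

lemma two_mul_measureReal_sub_eq (hμ : μ ≪ volume) (hν : ν ≪ volume) {A : Set ℝ}
    (hA : MeasurableSet A) :
    2 * (μ.real A - ν.real A) =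
      (∫ x in A, ((μ.rnDeriv volume x).toReal - (ν.rnDeriv volume x).toReal)) +
        ∫ x in Aᶜ, ((ν.rnDeriv volume x).toReal - (μ.rnDeriv volume x).toReal) := by
  have hp : Integrable fun x => (μ.rnDeriv volume x).toReal := Measure.integrable_toReal_rnDeriv
  have hq : Integrable fun x => (ν.rnDeriv volume x).toReal := Measure.integrable_toReal_rnDeriv
  rw [integral_sub hp.integrableOn hq.integrableOn, integral_sub hq.integrableOn hp.integrableOn,
    Measure.setIntegral_toReal_rnDeriv hμ, Measure.setIntegral_toReal_rnDeriv hν,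
    Measure.setIntegral_toReal_rnDeriv hμ, Measure.setIntegral_toReal_rnDeriv hν,
    probReal_compl_eq_one_sub hA, probReal_compl_eq_one_sub hA]
  ring

lemma measureReal_sub_le_TVD (hμ : μ ≪ volume) (hν : ν ≪ volume) {A : Set ℝ}
    (hA : MeasurableSet A) : μ.real A - ν.real A ≤ TVD μ ν := by
  set p := fun x => (μ.rnDeriv volume x).toReal
  set q := fun x => (ν.rnDeriv volume x).toReal
  have hp : Integrable p := Measure.integrable_toReal_rnDeriv
  have hq : Integrable q := Measure.integrable_toReal_rnDeriv
  have hpq : Integrable fun x => p x - q x := hp.sub hq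
  have hA_le : ∫ x in A, (p x - q x) ≤ ∫ x in A, |p x - q x| :=
    setIntegral_mono hpq.integrableOn hpq.abs.integrableOn fun x => le_abs_self _
  have hAc_le : ∫ x in Aᶜ, (q x - p x) ≤ ∫ x in Aᶜ, |p x - q x| :=
    setIntegral_mono (hq.sub hp).integrableOn hpq.abs.integrableOn fun x => by
      rw [abs_sub_comm]; exact le_abs_self _
  have := two_mul_measureReal_sub_eq hμ hν hA
  rw [TVD, ← integral_add_compl hA hpq.abs]
  linarith

lemma exists_TVD_eq_measureReal_sub (hμ : μ ≪ volume) (hν : ν ≪ volume) :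
    ∃ A, MeasurableSet A ∧ TVD μ ν = μ.real A - ν.real A := by
  set p := fun x => (μ.rnDeriv volume x).toReal
  set q := fun x => (ν.rnDeriv volume x).toReal
  have hpq : Integrable fun x => p x - q x :=
    Measure.integrable_toReal_rnDeriv.sub Measure.integrable_toReal_rnDeriv
  set A := {x | q x ≤ p x}
  have hA : MeasurableSet A :=
    measurableSet_le (Measure.measurable_rnDeriv _ _).ennreal_toReal
      (Measure.measurable_rnDeriv _ _).ennreal_toReal
  refine ⟨A, hA, ?_⟩
  have hA_eq : ∫ x in A, |p x - q x| = ∫ x in A, (p x - q x) :=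
    setIntegral_congr_fun hA fun x hx => abs_of_nonneg (sub_nonneg.2 hx)
  have hAc_eq : ∫ x in Aᶜ, |p x - q x| = ∫ x in Aᶜ, (q x - p x) :=
    setIntegral_congr_fun hA.compl fun x hx => by
      rw [abs_sub_comm]; exact abs_of_pos (sub_pos.2 (lt_of_not_ge hx))
  have := two_mul_measureReal_sub_eq hμ hν hA
  rw [TVD, ← integral_add_compl hA hpq.abs, hA_eq, hAc_eq]
  linarith

lemma TVD_map_le (hμ : μ ≪ volume) (hν : ν ≪ volume) {T : ℝ → ℝ} (hT : Measurable T)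
    (hμT : μ.map T ≪ volume) (hνT : ν.map T ≪ volume) :
    TVD (μ.map T) (ν.map T) ≤ TVD μ ν := by
  have := Measure.isProbabilityMeasure_map (μ := μ) hT.aemeasurable
  have := Measure.isProbabilityMeasure_map (μ := ν) hT.aemeasurable
  obtain ⟨A, hA, hTVD⟩ := exists_TVD_eq_measureReal_sub hμT hνT
  rw [hTVD, map_measureReal_apply hT hA, map_measureReal_apply hT hA]
  exact measureReal_sub_le_TVD hμ hν (hT hA)

end TotalVariation

lemma absolutelyContinuous_withDensity_ofReal {α : Type*} [MeasurableSpace α] {μ : Measure α}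
    {f : α → ℝ} (hf : Measurable f) (hpos : ∀ x, 0 < f x) :
    μ ≪ μ.withDensity fun x => ENNReal.ofReal (f x) :=
  withDensity_absolutelyContinuous' hf.ennreal_ofReal.aemeasurable
    (ae_of_all _ fun x => (ENNReal.ofReal_pos.2 (hpos x)).ne')

section Cdf

variable {Q : Measure ℝ} [IsProbabilityMeasure Q] {f : ℝ → ℝ}

lemma hasDerivAt_cdf_of_density (hf0 : ∀ x, 0 ≤ f x) (hfc : Continuous f)
    (hQ : Q = volume.withDensity fun x => ENNReal.ofReal (f x)) (x : ℝ) :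
    HasDerivAt (cdf Q) (f x) x := by
  have hQ_eq : ∀ s, MeasurableSet s → Q s = ∫⁻ t in s, ENNReal.ofReal (f t) :=
    fun s hs => by rw [hQ, withDensity_apply _ hs]
  have hfi : Integrable f := by
    refine ⟨hfc.aestronglyMeasurable, ?_⟩
    rw [hasFiniteIntegral_iff_ofReal (ae_of_all _ hf0), ← setLIntegral_univ,
      ← hQ_eq _ MeasurableSet.univ]
    exact measure_lt_top Q univ
  have hcdf : ∀ y, cdf Q y = ∫ t in Iic y, f t := fun y => by
    rw [cdf_eq_real, measureReal_def, hQ_eq _ measurableSet_Iic,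
      ← ofReal_integral_eq_lintegral_ofReal hfi.integrableOn (ae_of_all _ hf0),
      ENNReal.toReal_ofReal (setIntegral_nonneg measurableSet_Iic fun t _ => hf0 t)]
  have hcdf_eq : cdf Q = fun y => cdf Q 0 + ∫ t in (0 : ℝ)..y, f t := funext fun y => by
    rw [hcdf, hcdf, ← intervalIntegral.integral_Iic_sub_Iic hfi.integrableOn hfi.integrableOn]
    ring
  rw [hcdf_eq]
  exact (intervalIntegral.integral_hasDerivAt_right hfi.intervalIntegrable
    hfc.aestronglyMeasurable.stronglyMeasurableAtFilter hfc.continuousAt).const_add _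

lemma continuous_cdf_of_density (hf0 : ∀ x, 0 ≤ f x) (hfc : Continuous f)
    (hQ : Q = volume.withDensity fun x => ENNReal.ofReal (f x)) : Continuous (cdf Q) :=
  continuous_iff_continuousAt.2 fun x => (hasDerivAt_cdf_of_density hf0 hfc hQ x).continuousAt

lemma strictMono_cdf_of_density (hf : ∀ x, 0 < f x) (hfc : Continuous f)
    (hQ : Q = volume.withDensity fun x => ENNReal.ofReal (f x)) : StrictMono (cdf Q) :=
  strictMono_of_hasDerivAt_pos (hasDerivAt_cdf_of_density (fun x => (hf x).le) hfc hQ) hf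

lemma map_cdf_eq_volume_restrict_Ioo (hc : Continuous (cdf Q)) (hm : StrictMono (cdf Q)) :
    Q.map (cdf Q) = volume.restrict (Ioo 0 1) := by
  refine Measure.ext_of_Iic _ _ fun c => ?_
  rw [Measure.map_apply hc.measurable measurableSet_Iic, Measure.restrict_apply measurableSet_Iic]
  have hcdf_mem : ∀ x, cdf Q x ∈ Ioo 0 1 := fun x =>
    ⟨(cdf_nonneg Q (x - 1)).trans_lt (hm (sub_one_lt x)),
      (hm (lt_add_one x)).trans_le (cdf_le_one Q (x + 1))⟩
  rcases le_or_gt c 0 with hc0 | hc0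
  · have hempty : ∀ x, cdf Q x ∉ Iic c := fun x hx => (hcdf_mem x).1.not_ge (le_trans hx hc0)
    rw [show cdf Q ⁻¹' Iic c = ∅ from eq_empty_of_forall_notMem hempty,
      show Iic c ∩ Ioo 0 1 = ∅ from
        eq_empty_of_forall_notMem fun u hu => hu.2.1.not_ge (hu.1.trans hc0),
      measure_empty, measure_empty]
  rcases le_or_gt 1 c with hc1 | hc1
  · rw [show cdf Q ⁻¹' Iic c = univ from eq_univ_of_forall fun x => (hcdf_mem x).2.le.trans hc1,
      inter_eq_right.2 fun u hu => hu.2.le.trans hc1, measure_univ, Real.volume_Ioo]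
    simp
  obtain ⟨x, rfl⟩ : c ∈ range (cdf Q) := mem_range_of_exists_le_of_exists_ge hc
    ((tendsto_cdf_atBot Q).eventually (ge_mem_nhds hc0)).exists
    ((tendsto_cdf_atTop Q).eventually (le_mem_nhds hc1)).exists
  have hpre : cdf Q ⁻¹' Iic (cdf Q x) = Iic x := by ext; simp [hm.le_iff_le]
  rw [hpre, ← ofReal_cdf, show Iic (cdf Q x) ∩ Ioo 0 1 = Ioc 0 (cdf Q x) by
      ext u
      exact ⟨fun h => ⟨h.2.1, h.1⟩, fun h => ⟨h.2, h.1, h.2.trans_lt hc1⟩⟩,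
    Real.volume_Ioc, sub_zero]

end Cdf

noncomputable def simplicialDepth (Q : Measure ℝ) (x : ℝ) : ℝ :=
  2 * cdf Q x * (1 - cdf Q x)

/-- The law `R` of `SD(X; P)` for `X ∼ P`. -/
noncomputable def sdLaw : Measure ℝ :=
  volume.withDensity fun z =>
    ENNReal.ofReal (indicator (Icc (0 : ℝ) (1 / 2)) (fun z => 1 / Real.sqrt (1 - 2 * z)) z)

lemma hasDerivAt_neg_sqrt_one_sub_two_mul {t : ℝ} (ht : t < 1 / 2) :
    HasDerivAt (fun u => -Real.sqrt (1 - 2 * u)) (1 / Real.sqrt (1 - 2 * t)) t := by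
  have hpos : 0 < 1 - 2 * t := by linarith
  refine ((((hasDerivAt_id' t).const_mul 2).const_sub 1).sqrt hpos.ne').neg.congr_deriv ?_
  field_simp

lemma lintegral_Icc_one_div_sqrt_one_sub_two_mul {m : ℝ} (hm : m ≤ 1 / 2) :
    ∫⁻ t in Icc 0 m, ENNReal.ofReal (1 / Real.sqrt (1 - 2 * t)) =
      ENNReal.ofReal (1 - Real.sqrt (1 - 2 * m)) := by
  rcases lt_or_ge m 0 with hm0 | hm0
  · rw [Icc_eq_empty_of_lt hm0, Measure.restrict_empty, lintegral_zero_measure, eq_comm,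
      ENNReal.ofReal_eq_zero, sub_nonpos, Real.one_le_sqrt]
    linarith
  have hcont : ContinuousOn (fun u => -Real.sqrt (1 - 2 * u)) (Icc 0 m) := by fun_prop
  have hderiv : ∀ t ∈ Ioo 0 m, HasDerivAt (fun u => -Real.sqrt (1 - 2 * u))
      (1 / Real.sqrt (1 - 2 * t)) t := fun t ht =>
    hasDerivAt_neg_sqrt_one_sub_two_mul (ht.2.trans_le hm)
  have hint : IntegrableOn (fun t => 1 / Real.sqrt (1 - 2 * t)) (Ioc 0 m) :=
    intervalIntegral.integrableOn_deriv_of_nonneg hcont hderiv fun t _ => by positivity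
  rw [← setLIntegral_congr Ioc_ae_eq_Icc,
    ← ofReal_integral_eq_lintegral_ofReal hint (ae_of_all _ fun t => by positivity),
    ← intervalIntegral.integral_of_le hm0,
    intervalIntegral.integral_eq_sub_of_hasDerivAt_of_le hm0 hcont hderiv
      ((intervalIntegrable_iff_integrableOn_Ioc_of_le hm0).2 hint)]
  norm_num
  ring_nf

/-- Valid for every `z`: for `z < 0` the right side is `ofReal` of a negative number, and for
`z > 1 / 2` the square root is `0`. -/
lemma sdLaw_Iic (z : ℝ) : sdLaw (Iic z) = ENNReal.ofReal (1 - Real.sqrt (1 - 2 * z)) := by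
  have hdens : (fun z => ENNReal.ofReal
      (indicator (Icc (0 : ℝ) (1 / 2)) (fun z => 1 / Real.sqrt (1 - 2 * z)) z)) =
      indicator (Icc 0 (1 / 2)) fun z => ENNReal.ofReal (1 / Real.sqrt (1 - 2 * z)) :=
    funext fun z => (indicator_comp_of_zero ENNReal.ofReal_zero).symm ▸ rfl
  have hinter : Icc (0 : ℝ) (1 / 2) ∩ Iic z = Icc 0 (min z (1 / 2)) := by
    ext t; simp only [mem_inter_iff, mem_Icc, mem_Iic, le_min_iff]; tauto
  rw [sdLaw, withDensity_apply _ measurableSet_Iic, hdens,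
    setLIntegral_indicator measurableSet_Icc, hinter,
    lintegral_Icc_one_div_sqrt_one_sub_two_mul (min_le_right _ _)]
  rcases le_total z (1 / 2) with hz | hz
  · rw [min_eq_left hz]
  · rw [min_eq_right hz, Real.sqrt_eq_zero'.2 (by linarith), Real.sqrt_eq_zero'.2 (by linarith)]

lemma lt_two_mul_mul_one_sub_iff (u z : ℝ) :
    z < 2 * u * (1 - u) ↔ |1 - 2 * u| < Real.sqrt (1 - 2 * z) := by
  rw [Real.lt_sqrt (abs_nonneg _), sq_abs]
  constructor <;> intro h <;> nlinarith

lemma volume_Ioo_zero_one_sdiff_Ioo {s : ℝ} (hs : 0 ≤ s) :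
    volume (Ioo 0 1 \ Ioo ((1 - s) / 2) ((1 + s) / 2)) = ENNReal.ofReal (1 - s) := by
  rcases le_or_gt s 1 with hs1 | hs1
  · rw [measure_sdiff (Ioo_subset_Ioo (by linarith) (by linarith))
      measurableSet_Ioo.nullMeasurableSet measure_Ioo_lt_top.ne, Real.volume_Ioo, Real.volume_Ioo,
      ← ENNReal.ofReal_sub _ (by linarith)]
    ring_nf
  · rw [sdiff_eq_empty.2 (Ioo_subset_Ioo (by linarith) (by linarith)), measure_empty, eq_comm,
      ENNReal.ofReal_eq_zero]
    linarith

lemma map_volume_restrict_eq_sdLaw :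
    (volume.restrict (Ioo (0 : ℝ) 1)).map (fun u => 2 * u * (1 - u)) = sdLaw := by
  have hg : Measurable fun u : ℝ => 2 * u * (1 - u) := by fun_prop
  refine Measure.ext_of_Iic _ _ fun z => ?_
  have hpre : (fun u : ℝ => 2 * u * (1 - u)) ⁻¹' Iic z ∩ Ioo 0 1 =
      Ioo 0 1 \ Ioo ((1 - Real.sqrt (1 - 2 * z)) / 2) ((1 + Real.sqrt (1 - 2 * z)) / 2) := by
    ext u
    simp only [mem_inter_iff, mem_preimage, mem_Iic, Set.mem_sdiff, mem_Ioo, ← not_lt,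
      lt_two_mul_mul_one_sub_iff, abs_lt]
    rw [and_comm]
    exact and_congr_right' <| not_congr ⟨fun h => ⟨by linarith [h.2], by linarith [h.1]⟩,
      fun h => ⟨by linarith [h.2], by linarith [h.1]⟩⟩
  rw [Measure.map_apply hg measurableSet_Iic, Measure.restrict_apply (hg measurableSet_Iic), hpre,
    volume_Ioo_zero_one_sdiff_Ioo (Real.sqrt_nonneg _), sdLaw_Iic]

lemma TVD_map_simplicialDepth_le {P Q : Measure ℝ} [IsProbabilityMeasure P]
    [IsProbabilityMeasure Q] (hPQ : P ≪ Q) (hQ : Q ≪ volume) (hc : Continuous (cdf Q))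
    (hm : StrictMono (cdf Q)) :
    TVD (P.map (simplicialDepth Q)) sdLaw ≤ TVD P Q := by
  have hg : Measurable fun u : ℝ => 2 * u * (1 - u) := by fun_prop
  have hSD : Measurable (simplicialDepth Q) := hg.comp hc.measurable
  have hQ_SD : Q.map (simplicialDepth Q) = sdLaw := by
    rw [← map_volume_restrict_eq_sdLaw, ← map_cdf_eq_volume_restrict_Ioo hc hm,
      Measure.map_map hg hc.measurable]
    rfl
  have hR : sdLaw ≪ volume := withDensity_absolutelyContinuous _ _
  rw [← hQ_SD]
  exact TVD_map_le (hPQ.trans hQ) hQ hSD ((hPQ.map hSD).trans (hQ_SD ▸ hR)) (hQ_SD ▸ hR)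

/-- Let `P, Q` have everywhere positive continuous densities `fX, fY` and CDFs `FX, FY`.
With `Q_P^{SD}` the law of `2 FY(X) (1 - FY(X))` for `X ~ P`, `P_Q^{SD}` the law of
`2 FX(Y) (1 - FX(Y))` for `Y ~ Q`, and `R` the distribution on `[0, 1/2]` with density
`r(z) = 1 / √(1 - 2 z)`, we have `TVD(Q_P^{SD}, R) ≤ TVD(P, Q)` and
`TVD(P_Q^{SD}, R) ≤ TVD(P, Q)`. -/
theorem sd_induced_tvd_le
    (P Q : Measure ℝ) [IsProbabilityMeasure P] [IsProbabilityMeasure Q]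
    (fX fY : ℝ → ℝ) (hfXpos : ∀ x, 0 < fX x) (hfYpos : ∀ x, 0 < fY x)
    (hfXc : Continuous fX) (hfYc : Continuous fY)
    (hP : P = volume.withDensity (fun x => ENNReal.ofReal (fX x)))
    (hQ : Q = volume.withDensity (fun x => ENNReal.ofReal (fY x)))
    (FX FY : ℝ → ℝ)
    (hFX : ∀ x, FX x = (P (Iic x)).toReal)
    (hFY : ∀ x, FY x = (Q (Iic x)).toReal) :
    TVD (Measure.map (fun x => 2 * FY x * (1 - FY x)) P)
        (volume.withDensity (fun z => ENNReal.ofReal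
          (indicator (Icc (0 : ℝ) (1 / 2)) (fun z => 1 / Real.sqrt (1 - 2 * z)) z)))
      ≤ TVD P Q ∧
    TVD (Measure.map (fun y => 2 * FX y * (1 - FX y)) Q)
        (volume.withDensity (fun z => ENNReal.ofReal
          (indicator (Icc (0 : ℝ) (1 / 2)) (fun z => 1 / Real.sqrt (1 - 2 * z)) z)))
      ≤ TVD P Q := by
  obtain rfl : FX = cdf P := funext fun x => (hFX x).trans (cdf_eq_real P x).symm
  obtain rfl : FY = cdf Q := funext fun x => (hFY x).trans (cdf_eq_real Q x).symm
  have hPv : P ≪ volume := hP ▸ withDensity_absolutelyContinuous _ _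
  have hQv : Q ≪ volume := hQ ▸ withDensity_absolutelyContinuous _ _
  have hvP : volume ≪ P := hP ▸ absolutelyContinuous_withDensity_ofReal hfXc.measurable hfXpos
  have hvQ : volume ≪ Q := hQ ▸ absolutelyContinuous_withDensity_ofReal hfYc.measurable hfYpos
  constructor
  · exact TVD_map_simplicialDepth_le (hPv.trans hvQ) hQv
      (continuous_cdf_of_density (fun x => (hfYpos x).le) hfYc hQ)
      (strictMono_cdf_of_density hfYpos hfYc hQ)
  · rw [TVD_comm P Q]
    exact TVD_map_simplicialDepth_le (hQv.trans hvP) hPv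
      (continuous_cdf_of_density (fun x => (hfXpos x).le) hfXc hP)
      (strictMono_cdf_of_density hfXpos hfXc hP)
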